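/- arXiv:1903.08614 — 6 statements merged into one kernel-verified Lean document; each statement's English description precedes it below -/
import Mathlib

section
/- Let G be a graph, F a minimum zero forcing set, and S a chain set corresponding to F. Each chain R in S induces an induced path in G, i.e., the subgraph of G induced by the vertices of R is a path whose vertex ordering agrees with the chain order. -/
open SimpleGraph

/-- The set of vertices colored after `n` steps of the zero forcing process
starting from the initially colored set `F`. -/
def coloredAt {V : Type*} (G : SimpleGraph V) (F : Set V) : ℕ → Set V
  | 0 => F
  | n + 1 => coloredAt G F n ∪
      {w | ∃ u ∈ coloredAt G F n, G.Adj u w ∧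
        ∀ x, G.Adj u x → x ≠ w → x ∈ coloredAt G F n}

/-- `F` is a zero forcing set of `G`. -/
def IsForcingSet {V : Type*} (G : SimpleGraph V) (F : Set V) : Prop :=
  ∀ v, ∃ n, v ∈ coloredAt G F n

/-- The zero forcing number of `G`. -/
noncomputable def forcingNumber {V : Type*} (G : SimpleGraph V) [Fintype V] : ℕ :=
  sInf {k | ∃ F : Finset V, F.card = k ∧ IsForcingSet G ↑F}

/-- The step at which `v` gets colored. -/
noncomputable def kF {V : Type*} (G : SimpleGraph V) (F : Set V) (v : V) : ℕ :=
  sInf {n | v ∈ coloredAt G F n}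

/-- `u` forces `w` in the forcing process started at `F`. -/
def Forces {V : Type*} (G : SimpleGraph V) (F : Set V) (u w : V) : Prop :=
  G.Adj u w ∧ kF G F u < kF G F w ∧
    ∀ x, G.Adj u x → x ≠ w → kF G F x < kF G F w

/-- A chain set corresponding to the forcing set `F`: a partition of the vertex
set into `k` sequences, each starting at a vertex of `F`, in which every vertex
forces its successor. -/
def IsChainSet {V : Type*} {k : ℕ} (G : SimpleGraph V) (F : Set V)
    (R : Fin k → List V) : Prop :=
  (∀ i, R i ≠ []) ∧
  (∀ i (h : R i ≠ []), (R i).head h ∈ F) ∧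
  (∀ i, (R i).Chain' (Forces G F)) ∧
  (∀ i, (R i).Nodup) ∧
  (∀ i j, i ≠ j → ∀ v, v ∈ R i → v ∉ R j) ∧
  (∀ v, ∃ i, v ∈ R i)

/-- `u` precedes `v` in the chain (list) `L`. -/
def Precedes {V : Type*} (L : List V) (u v : V) : Prop :=
  ∃ p q : Fin L.length, (p : ℕ) < (q : ℕ) ∧ L.get p = u ∧ L.get q = v

/-- Each chain of a chain set corresponding to a minimum zero forcing set induces
an induced path in `G`, with vertex ordering given by the chain order: consecutive
vertices of a chain are adjacent, and non-consecutive ones are not. -/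
theorem chain_is_induced_path {V : Type*} [Fintype V]
    (G : SimpleGraph V) {k : ℕ} (F : Finset V)
    (hmin : F.card = forcingNumber G) (hF : IsForcingSet G ↑F)
    (R : Fin k → List V) (hR : IsChainSet G ↑F R) (i : Fin k) :
    (∀ a b : Fin (R i).length, (a : ℕ) + 1 = (b : ℕ) →
      G.Adj ((R i).get a) ((R i).get b)) ∧
    (∀ a b : Fin (R i).length, (a : ℕ) + 1 < (b : ℕ) →
      ¬ G.Adj ((R i).get a) ((R i).get b)) := by
  have hchain := hR.2.2.1 i
  have hnodup := hR.2.2.2.1 i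
  rw [List.Chain', List.isChain_iff_getElem] at hchain
  have hmono : ∀ p q : Fin (R i).length, (p : ℕ) < (q : ℕ) →
      kF G (↑F) ((R i).get p) < kF G (↑F) ((R i).get q) := by
    have hpw : (R i).Pairwise (fun u v => kF G (↑F) u < kF G (↑F) v) := by
      haveI : IsTrans V (fun u v => kF G (↑F) u < kF G (↑F) v) :=
        ⟨fun a b c hab hbc => lt_trans hab hbc⟩
      exact List.isChain_iff_pairwise.mp
        (List.IsChain.imp (fun a b h => h.2.1) (hR.2.2.1 i))
    rw [List.pairwise_iff_get] at hpw
    exact fun p q h => hpw p q h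
  constructor
  · intro a b hab
    have hb : (a : ℕ) < (R i).length - 1 := by have := b.2; omega
    have hb' : (a : ℕ) + 1 < (R i).length := by omega
    have := hchain a hb'
    have hgb : b = ⟨(a:ℕ)+1, hb'⟩ := Fin.ext hab.symm
    rw [hgb]
    exact this.1
  · intro a b hab hAdj
    have hc : (a : ℕ) + 1 < (R i).length := lt_trans hab b.2
    set c : Fin (R i).length := ⟨(a:ℕ)+1, hc⟩ with hcdef
    have hforce := hchain a hc
    have hne : (R i).get b ≠ (R i).get c := by
      intro h
      have : b = c := (List.Nodup.get_inj_iff hnodup).mp h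
      have := congrArg (Fin.val) this
      simp [hcdef] at this
      omega
    have h1 : kF G (↑F) ((R i).get b) < kF G (↑F) ((R i).get c) :=
      hforce.2.2 _ hAdj hne
    have h2 : kF G (↑F) ((R i).get c) < kF G (↑F) ((R i).get b) :=
      hmono c b (by simp [hcdef]; omega)
    omega
end

section
/- For n >= 6, the complete graph K_n is not a graph of k-parallel paths for any k in {1, ..., n}. -/
open SimpleGraph

/-- A standard drawing of `G` as a graph of `k` parallel paths: `k` vertex-disjoint
induced paths covering all vertices, drawn in the plane as parallel horizontal lines
(vertices placed injectively, each path on its own horizontal line with increasing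
x-coordinates), such that the edges between different paths, drawn as straight-line
segments, do not cross each other. -/
structure ParallelPathsDrawing {V : Type*} (G : SimpleGraph V) (k : ℕ) where
  paths : Fin k → List V
  pos : V → ℝ × ℝ
  nonempty : ∀ i, paths i ≠ []
  nodup : ∀ i, (paths i).Nodup
  disjoint : ∀ i j, i ≠ j → ∀ v, v ∈ paths i → v ∉ paths j
  cover : ∀ v, ∃ i, v ∈ paths i
  isPath : ∀ i, (paths i).Chain' G.Adj
  induced : ∀ i, ∀ a b : Fin (paths i).length,
      (a : ℕ) + 1 < (b : ℕ) → ¬ G.Adj ((paths i).get a) ((paths i).get b)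
  inj : Function.Injective pos
  sameY : ∀ i, ∀ u ∈ paths i, ∀ v ∈ paths i, (pos u).2 = (pos v).2
  diffY : ∀ i j, i ≠ j → ∀ u ∈ paths i, ∀ v ∈ paths j, (pos u).2 ≠ (pos v).2
  increasingX : ∀ i, ((paths i).map (fun v => (pos v).1)).Chain' (· < ·)
  noncross : ∀ u v u' v' : V, G.Adj u v → G.Adj u' v' →
      (∀ i, ¬ (u ∈ paths i ∧ v ∈ paths i)) →
      (∀ i, ¬ (u' ∈ paths i ∧ v' ∈ paths i)) →
      ({u, v} : Set V) ≠ {u', v'} →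
      openSegment ℝ (pos u) (pos v) ∩ openSegment ℝ (pos u') (pos v') = ∅

/-- `G` admits a standard drawing with `k` parallel paths. -/
def HasParallelDrawing {V : Type*} (G : SimpleGraph V) (k : ℕ) : Prop :=
  Nonempty (ParallelPathsDrawing G k)

/-- `G` is a graph of `k`-parallel paths: it admits a standard drawing with `k`
parallel paths and with no fewer. -/
def IsGraphOfParallelPaths {V : Type*} (G : SimpleGraph V) (k : ℕ) : Prop :=
  HasParallelDrawing G k ∧ ∀ j, 0 < j → j < k → ¬ HasParallelDrawing G j



noncomputable def Xat (P Q : ℝ × ℝ) (y : ℝ) : ℝ :=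
  P.1 + (Q.1 - P.1) / (Q.2 - P.2) * (y - P.2)

def Dn (P Q R : ℝ × ℝ) : ℝ :=
  (Q.1 - P.1) * (R.2 - P.2) - (Q.2 - P.2) * (R.1 - P.1)

lemma Xat_fst (P Q : ℝ × ℝ) : Xat P Q P.2 = P.1 := by simp [Xat]

lemma Xat_snd (P Q : ℝ × ℝ) (h : P.2 ≠ Q.2) : Xat P Q Q.2 = Q.1 := by
  have h' : Q.2 - P.2 ≠ 0 := sub_ne_zero_of_ne h.symm
  unfold Xat
  linear_combination div_mul_cancel₀ (Q.1 - P.1) h'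

lemma Xat_sub (P Q R : ℝ × ℝ) (h : P.2 ≠ Q.2) :
    Xat P Q R.2 - R.1 = Dn P Q R / (Q.2 - P.2) := by
  have h' : Q.2 - P.2 ≠ 0 := sub_ne_zero_of_ne h.symm
  rw [eq_div_iff h']
  unfold Xat Dn
  linear_combination (R.2 - P.2) * div_mul_cancel₀ (Q.1 - P.1) h'

lemma mem_openSegment_of (P Q : ℝ × ℝ) (h : P.2 < Q.2) {y : ℝ}
    (h1 : P.2 < y) (h2 : y < Q.2) : (Xat P Q y, y) ∈ openSegment ℝ P Q := by
  have hQP : (0:ℝ) < Q.2 - P.2 := by linarith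
  refine ⟨1 - (y - P.2)/(Q.2 - P.2), (y - P.2)/(Q.2 - P.2), ?_, ?_, by ring, ?_⟩
  · have : (y - P.2)/(Q.2 - P.2) < 1 := by rw [div_lt_one hQP]; linarith
    linarith
  · exact div_pos (by linarith) hQP
  · have h' : Q.2 - P.2 ≠ 0 := ne_of_gt hQP
    apply Prod.ext <;> simp [Prod.smul_fst, Prod.smul_snd, smul_eq_mul, Xat] <;> field_simp <;> ring

lemma cross_core (P Q A B : ℝ × ℝ) (hPQ : P.2 < Q.2) (hAB : A.2 < B.2) (lo hi : ℝ)
    (hPl : P.2 ≤ lo) (hAl : A.2 ≤ lo) (hlh : lo < hi) (hhQ : hi ≤ Q.2) (hhB : hi ≤ B.2)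
    (hneg : Xat P Q lo - Xat A B lo < 0) (hpos : 0 < Xat P Q hi - Xat A B hi) :
    (openSegment ℝ P Q ∩ openSegment ℝ A B).Nonempty := by
  have hg : ContinuousOn (fun y => Xat P Q y - Xat A B y) (Set.Icc lo hi) := by
    apply Continuous.continuousOn
    unfold Xat
    fun_prop
  have hiv := intermediate_value_Ioo (le_of_lt hlh) hg
  have h0 : (0:ℝ) ∈ Set.Ioo (Xat P Q lo - Xat A B lo) (Xat P Q hi - Xat A B hi) :=
    ⟨hneg, hpos⟩
  obtain ⟨y0, hy0, hgy0⟩ := hiv h0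
  have heq : Xat P Q y0 = Xat A B y0 := by
    have : Xat P Q y0 - Xat A B y0 = 0 := hgy0
    linarith
  refine ⟨(Xat P Q y0, y0), mem_openSegment_of P Q hPQ (by linarith [hy0.1]) (by linarith [hy0.2]), ?_⟩
  rw [heq]
  exact mem_openSegment_of A B hAB (by linarith [hy0.1]) (by linarith [hy0.2])

lemma cross_main (P Q A B : ℝ × ℝ) (hPQ : P.2 < Q.2) (hAB : A.2 < B.2) (lo hi : ℝ)
    (hPl : P.2 ≤ lo) (hAl : A.2 ≤ lo) (hlh : lo < hi) (hhQ : hi ≤ Q.2) (hhB : hi ≤ B.2)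
    (hsign : (Xat P Q lo - Xat A B lo) * (Xat P Q hi - Xat A B hi) < 0) :
    (openSegment ℝ P Q ∩ openSegment ℝ A B).Nonempty := by
  rcases lt_trichotomy (Xat P Q lo - Xat A B lo) 0 with hlt | heq | hgt
  · exact cross_core P Q A B hPQ hAB lo hi hPl hAl hlh hhQ hhB hlt (by nlinarith)
  · rw [heq, zero_mul] at hsign; exact absurd hsign (lt_irrefl 0)
  · obtain ⟨z, h1, h2⟩ := cross_core A B P Q hAB hPQ lo hi hAl hPl hlh hhB hhQ
      (by linarith) (by nlinarith)
    exact ⟨z, h2, h1⟩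

lemma nested_pos (P A B Q : ℝ × ℝ) (h1 : P.2 < A.2) (h2 : A.2 < B.2) (h3 : B.2 < Q.2)
    (hdisj : openSegment ℝ P Q ∩ openSegment ℝ A B = ∅)
    (hA : Dn P Q A ≠ 0) (hB : Dn P Q B ≠ 0) : 0 < Dn P Q A * Dn P Q B := by
  rcases (mul_ne_zero hA hB).lt_or_gt with hneg | hpos
  · exfalso
    have hPQ2 : P.2 ≠ Q.2 := by intro h; linarith [h1, h2, h3]
    have e1 : Xat P Q A.2 - Xat A B A.2 = Dn P Q A / (Q.2 - P.2) := by
      rw [Xat_fst A B]; exact Xat_sub P Q A hPQ2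
    have e2 : Xat P Q B.2 - Xat A B B.2 = Dn P Q B / (Q.2 - P.2) := by
      rw [Xat_snd A B (ne_of_lt h2)]; exact Xat_sub P Q B hPQ2
    have hQP : (0:ℝ) < Q.2 - P.2 := by linarith
    have hsign : (Xat P Q A.2 - Xat A B A.2) * (Xat P Q B.2 - Xat A B B.2) < 0 := by
      rw [e1, e2, div_mul_div_comm]
      exact div_neg_of_neg_of_pos hneg (by positivity)
    have := cross_main P Q A B (by linarith) h2 A.2 B.2 (le_of_lt h1) le_rfl h2
      (le_of_lt h3) le_rfl hsign
    rw [hdisj] at this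
    exact Set.not_nonempty_empty this
  · exact hpos

lemma interl_neg (P A Q B : ℝ × ℝ) (h1 : P.2 < A.2) (h2 : A.2 < Q.2) (h3 : Q.2 < B.2)
    (hdisj : openSegment ℝ P Q ∩ openSegment ℝ A B = ∅)
    (hA : Dn P Q A ≠ 0) (hQ : Dn A B Q ≠ 0) : Dn P Q A * Dn A B Q < 0 := by
  rcases (mul_ne_zero hA hQ).lt_or_gt with hneg | hpos
  · exact hneg
  · exfalso
    have hPQ2 : P.2 ≠ Q.2 := ne_of_lt (by linarith)
    have hAB2 : A.2 ≠ B.2 := ne_of_lt (by linarith)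
    have e1 : Xat P Q A.2 - Xat A B A.2 = Dn P Q A / (Q.2 - P.2) := by
      rw [Xat_fst A B]; exact Xat_sub P Q A hPQ2
    have e2 : Xat P Q Q.2 - Xat A B Q.2 = -(Dn A B Q / (B.2 - A.2)) := by
      have hx := Xat_sub A B Q hAB2
      have hs := Xat_snd P Q hPQ2
      linarith
    have hQP : (0:ℝ) < Q.2 - P.2 := by linarith
    have hBA : (0:ℝ) < B.2 - A.2 := by linarith
    have hsign : (Xat P Q A.2 - Xat A B A.2) * (Xat P Q Q.2 - Xat A B Q.2) < 0 := by
      rw [e1, e2, mul_neg, neg_lt_zero, div_mul_div_comm]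
      exact div_pos hpos (by positivity)
    have := cross_main P Q A B (by linarith) (by linarith) A.2 Q.2 (le_of_lt h1) le_rfl h2
      le_rfl (le_of_lt h3) hsign
    rw [hdisj] at this
    exact Set.not_nonempty_empty this

lemma collinear_contra (P Q R : ℝ × ℝ) (h1 : P.2 < R.2) (h2 : R.2 < Q.2)
    (hdisj : openSegment ℝ P Q ∩ openSegment ℝ P R = ∅) : Dn P Q R ≠ 0 := by
  intro h0
  have hQP : (0:ℝ) < Q.2 - P.2 := by linarith
  set t := (R.2 - P.2)/(Q.2 - P.2) with htdef
  have ht0 : 0 < t := div_pos (by linarith) hQP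
  have ht1 : t < 1 := by rw [htdef, div_lt_one hQP]; linarith
  have hR1 : R.1 - P.1 = (Q.1 - P.1) * t := by
    rw [htdef]
    field_simp
    unfold Dn at h0
    nlinarith [h0]
  have hR2 : R.2 - P.2 = (Q.2 - P.2) * t := by
    rw [htdef]; field_simp
  set z : ℝ × ℝ := (1 - t/2) • P + (t/2) • Q with hzdef
  have hz1 : z ∈ openSegment ℝ P Q :=
    ⟨1 - t/2, t/2, by linarith, by linarith, by ring, rfl⟩
  have hz2 : z ∈ openSegment ℝ P R := by
    refine ⟨1/2, 1/2, by norm_num, by norm_num, by norm_num, ?_⟩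
    rw [hzdef]
    apply Prod.ext <;>
      simp [Prod.smul_fst, Prod.smul_snd, smul_eq_mul] <;> nlinarith [hR1, hR2]
  have : z ∈ (∅ : Set (ℝ × ℝ)) := hdisj ▸ ⟨hz1, hz2⟩
  exact Set.notMem_empty z this

lemma sgn_oo (x y z : ℝ) (h1 : x*y < 0) (h2 : y*z < 0) : 0 < x*z := by
  nlinarith [mul_pos (neg_pos.mpr h1) (neg_pos.mpr h2), sq_nonneg y]

lemma sgn_po (x y z : ℝ) (h1 : 0 < x*y) (h2 : y*z < 0) : x*z < 0 := by
  nlinarith [mul_pos h1 (neg_pos.mpr h2), sq_nonneg y]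

lemma sgn_pp (x y z : ℝ) (h1 : 0 < x*y) (h2 : 0 < y*z) : 0 < x*z := by
  nlinarith [mul_pos h1 h2, sq_nonneg y]

lemma L5sorted (p : Fin 5 → ℝ × ℝ) (hs : ∀ i j : Fin 5, i < j → (p i).2 < (p j).2)
    (hnc : ∀ a b c d : Fin 5, a ≠ b → c ≠ d → ¬(a = c ∧ b = d) → ¬(a = d ∧ b = c) →
      openSegment ℝ (p a) (p b) ∩ openSegment ℝ (p c) (p d) = ∅) : False := by
  have h01 : (p 0).2 < (p 1).2 := hs 0 1 (by decide)
  have h12 : (p 1).2 < (p 2).2 := hs 1 2 (by decide)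
  have h23 : (p 2).2 < (p 3).2 := hs 2 3 (by decide)
  have h34 : (p 3).2 < (p 4).2 := hs 3 4 (by decide)
  -- nonzero determinants
  have nzA : Dn (p 0) (p 2) (p 1) ≠ 0 :=
    collinear_contra _ _ _ h01 h12 (hnc 0 2 0 1 (by decide) (by decide) (by decide) (by decide))
  have nzB : Dn (p 1) (p 3) (p 2) ≠ 0 :=
    collinear_contra _ _ _ h12 h23 (hnc 1 3 1 2 (by decide) (by decide) (by decide) (by decide))
  have nzC : Dn (p 2) (p 4) (p 3) ≠ 0 :=
    collinear_contra _ _ _ h23 h34 (hnc 2 4 2 3 (by decide) (by decide) (by decide) (by decide))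
  have nzE : Dn (p 0) (p 3) (p 1) ≠ 0 :=
    collinear_contra _ _ _ h01 (by linarith) (hnc 0 3 0 1 (by decide) (by decide) (by decide) (by decide))
  have nzF : Dn (p 0) (p 3) (p 2) ≠ 0 :=
    collinear_contra _ _ _ (by linarith) h23 (hnc 0 3 0 2 (by decide) (by decide) (by decide) (by decide))
  have nzG : Dn (p 1) (p 4) (p 2) ≠ 0 :=
    collinear_contra _ _ _ h12 (by linarith) (hnc 1 4 1 2 (by decide) (by decide) (by decide) (by decide))
  have nzH : Dn (p 1) (p 4) (p 3) ≠ 0 :=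
    collinear_contra _ _ _ (by linarith) h34 (hnc 1 4 1 3 (by decide) (by decide) (by decide) (by decide))
  -- constraints
  have N1 : 0 < Dn (p 0) (p 3) (p 1) * Dn (p 0) (p 3) (p 2) :=
    nested_pos _ _ _ _ h01 h12 h23 (hnc 0 3 1 2 (by decide) (by decide) (by decide) (by decide)) nzE nzF
  have N2 : 0 < Dn (p 1) (p 4) (p 2) * Dn (p 1) (p 4) (p 3) :=
    nested_pos _ _ _ _ h12 h23 h34 (hnc 1 4 2 3 (by decide) (by decide) (by decide) (by decide)) nzG nzH
  have I1 : Dn (p 0) (p 2) (p 1) * Dn (p 1) (p 3) (p 2) < 0 :=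
    interl_neg _ _ _ _ h01 h12 h23 (hnc 0 2 1 3 (by decide) (by decide) (by decide) (by decide)) nzA nzB
  have I2 : Dn (p 1) (p 3) (p 2) * Dn (p 2) (p 4) (p 3) < 0 :=
    interl_neg _ _ _ _ h12 h23 h34 (hnc 1 3 2 4 (by decide) (by decide) (by decide) (by decide)) nzB nzC
  have I3 : Dn (p 0) (p 3) (p 1) * Dn (p 1) (p 4) (p 3) < 0 :=
    interl_neg _ _ _ _ h01 (by linarith) h34 (hnc 0 3 1 4 (by decide) (by decide) (by decide) (by decide)) nzE nzH
  have I4 : Dn (p 0) (p 3) (p 2) * Dn (p 2) (p 4) (p 3) < 0 :=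
    interl_neg _ _ _ _ (by linarith) h23 h34 (hnc 0 3 2 4 (by decide) (by decide) (by decide) (by decide)) nzF nzC
  have I5 : Dn (p 0) (p 2) (p 1) * Dn (p 1) (p 4) (p 2) < 0 :=
    interl_neg _ _ _ _ h01 h12 (by linarith) (hnc 0 2 1 4 (by decide) (by decide) (by decide) (by decide)) nzA nzG
  set A := Dn (p 0) (p 2) (p 1)
  set B := Dn (p 1) (p 3) (p 2)
  set C := Dn (p 2) (p 4) (p 3)
  set E := Dn (p 0) (p 3) (p 1)
  set F := Dn (p 0) (p 3) (p 2)
  set G := Dn (p 1) (p 4) (p 2)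
  set H := Dn (p 1) (p 4) (p 3)
  have hAC : 0 < A * C := sgn_oo A B C I1 I2
  have hEC : E * C < 0 := sgn_po E F C N1 I4
  have hHC : 0 < H * C := sgn_oo H E C (by rw [mul_comm]; exact I3) hEC
  have hGC : 0 < G * C := sgn_pp G H C N2 hHC
  have hCA : C * A < 0 := sgn_po C G A (by rw [mul_comm]; exact hGC) (by rw [mul_comm]; exact I5)
  rw [mul_comm] at hCA
  linarith

lemma L5un (p : Fin 5 → ℝ × ℝ) (hy : ∀ a b : Fin 5, a ≠ b → (p a).2 ≠ (p b).2)
    (hnc : ∀ a b c d : Fin 5, a ≠ b → c ≠ d → ¬(a = c ∧ b = d) → ¬(a = d ∧ b = c) →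
      openSegment ℝ (p a) (p b) ∩ openSegment ℝ (p c) (p d) = ∅) : False := by
  have hinj : Function.Injective (fun i : Fin 5 => (p i).2) := by
    intro a b h
    by_contra hne
    exact hy a b hne h
  set t : Finset ℝ := Finset.image (fun i : Fin 5 => (p i).2) Finset.univ with htdef
  have hcard : t.card = 5 := by
    rw [htdef, Finset.card_image_of_injective _ hinj, Finset.card_univ, Fintype.card_fin]
  let oi := t.orderIsoOfFin hcard
  have hex : ∀ m : Fin 5, ∃ i : Fin 5, (p i).2 = (oi m : ℝ) := by
    intro m
    obtain ⟨i, _, hi⟩ := Finset.mem_image.mp (oi m).2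
    exact ⟨i, hi⟩
  choose σ hσ using hex
  have hσinj : Function.Injective σ := by
    intro a b h
    apply oi.injective
    apply Subtype.ext
    rw [← hσ a, ← hσ b, h]
  apply L5sorted (p ∘ σ)
  · intro i j hij
    have := oi.strictMono hij
    rw [← Subtype.coe_lt_coe] at this
    simpa [Function.comp, hσ i, hσ j] using this
  · intro a b c d hab hcd h1 h2
    exact hnc (σ a) (σ b) (σ c) (σ d)
      (fun h => hab (hσinj h)) (fun h => hcd (hσinj h))
      (fun ⟨x, y⟩ => h1 ⟨hσinj x, hσinj y⟩) (fun ⟨x, y⟩ => h2 ⟨hσinj x, hσinj y⟩)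

lemma L22core (A1 A2 C1 C2 : ℝ × ℝ) (hA : A1.2 = A2.2) (hC : C1.2 = C2.2)
    (hx1 : A1.1 < A2.1) (hx2 : C1.1 < C2.1) :
    (openSegment ℝ A1 C2 ∩ openSegment ℝ A2 C1).Nonempty := by
  set s := (A2.1 - A1.1) + (C2.1 - C1.1) with hsdef
  have hspos : 0 < s := by rw [hsdef]; linarith
  set u := (A2.1 - A1.1)/s with hudef
  have hu0 : 0 < u := div_pos (by linarith) hspos
  have hu1 : u < 1 := by rw [hudef, div_lt_one hspos]; linarith
  refine ⟨(1 - u) • A1 + u • C2, ⟨1 - u, u, by linarith, hu0, by ring, rfl⟩,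
    ⟨1 - u, u, by linarith, hu0, by ring, ?_⟩⟩
  have hs0 : s ≠ 0 := ne_of_gt hspos
  have hmul : u * s = A2.1 - A1.1 := by rw [hudef]; field_simp
  apply Prod.ext
  · simp only [Prod.fst_add, Prod.smul_fst, smul_eq_mul]
    linear_combination (-1 : ℝ) * hmul + u * hsdef
  · simp only [Prod.snd_add, Prod.smul_snd, smul_eq_mul]
    rw [hA, hC]


lemma cross22 (A1 A2 C1 C2 : ℝ × ℝ) (hA : A1.2 = A2.2) (hC : C1.2 = C2.2)
    (hxA : A1.1 ≠ A2.1) (hxC : C1.1 ≠ C2.1)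
    (h1 : openSegment ℝ A1 C2 ∩ openSegment ℝ A2 C1 = ∅)
    (h2 : openSegment ℝ A1 C1 ∩ openSegment ℝ A2 C2 = ∅) : False := by
  rcases hxA.lt_or_gt with ha | ha <;> rcases hxC.lt_or_gt with hc | hc
  · obtain ⟨z, hz⟩ := L22core A1 A2 C1 C2 hA hC ha hc
    exact Set.notMem_empty z (h1 ▸ hz)
  · obtain ⟨z, hz⟩ := L22core A1 A2 C2 C1 hA hC.symm ha hc
    exact Set.notMem_empty z (h2 ▸ hz)
  · obtain ⟨z, hz1, hz2⟩ := L22core A2 A1 C1 C2 hA.symm hC ha hc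
    exact Set.notMem_empty z (h2 ▸ Set.mem_inter hz2 hz1)
  · obtain ⟨z, hz1, hz2⟩ := L22core A2 A1 C2 C1 hA.symm hC.symm ha hc
    exact Set.notMem_empty z (h1 ▸ Set.mem_inter hz2 hz1)

/-- For `n ≥ 6`, the complete graph `K_n` is not a graph of `k`-parallel paths
for any `k ∈ {1, …, n}`. -/
theorem completeGraph_not_parallelPaths (n : ℕ) (hn : 6 ≤ n) :
    ∀ k : ℕ, 1 ≤ k → k ≤ n →
      ¬ IsGraphOfParallelPaths (⊤ : SimpleGraph (Fin n)) k := by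
  intro k _ _ hIs
  obtain ⟨⟨d⟩, -⟩ := hIs
  have hne' : ∀ (a b : Fin k), a ≠ b → ∀ u ∈ d.paths a, ∀ v ∈ d.paths b, u ≠ v := by
    intro a b hab u hu v hv h
    exact d.disjoint a b hab u hu (h ▸ hv)
  have hsep : ∀ (a b : Fin k), a ≠ b → ∀ u ∈ d.paths a, ∀ v ∈ d.paths b,
      ∀ l, ¬(u ∈ d.paths l ∧ v ∈ d.paths l) := by
    rintro a b hab u hu v hv l ⟨hul, hvl⟩
    rcases eq_or_ne l a with rfl | hla
    · exact d.disjoint b l (Ne.symm hab) v hv hvl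
    · exact d.disjoint a l (Ne.symm hla) u hu hul
  have hlen : ∀ i, (d.paths i).length ≤ 2 := by
    intro i
    by_contra hcon
    push_neg at hcon
    have hind := d.induced i ⟨0, by omega⟩ ⟨2, by omega⟩ (by simp)
    apply hind
    rw [SimpleGraph.top_adj]
    intro heq
    have h := List.nodup_iff_injective_get.mp (d.nodup i) heq
    simp [Fin.ext_iff] at h
  by_cases hpair : ∃ i j : Fin k, i ≠ j ∧ 2 ≤ (d.paths i).length ∧ 2 ≤ (d.paths j).length
  · obtain ⟨i, j, hij, hi2, hj2⟩ := hpair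
    set u1 := (d.paths i).get ⟨0, by omega⟩ with hu1def
    set u2 := (d.paths i).get ⟨1, by omega⟩ with hu2def
    set v1 := (d.paths j).get ⟨0, by omega⟩ with hv1def
    set v2 := (d.paths j).get ⟨1, by omega⟩ with hv2def
    have hu1m : u1 ∈ d.paths i := List.get_mem _ _
    have hu2m : u2 ∈ d.paths i := List.get_mem _ _
    have hv1m : v1 ∈ d.paths j := List.get_mem _ _
    have hv2m : v2 ∈ d.paths j := List.get_mem _ _
    have hu12 : u1 ≠ u2 := by
      intro h
      have := List.nodup_iff_injective_get.mp (d.nodup i) h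
      simp [Fin.ext_iff] at this
    have hv12 : v1 ≠ v2 := by
      intro h
      have := List.nodup_iff_injective_get.mp (d.nodup j) h
      simp [Fin.ext_iff] at this
    have hyu : (d.pos u1).2 = (d.pos u2).2 := d.sameY i u1 hu1m u2 hu2m
    have hyv : (d.pos v1).2 = (d.pos v2).2 := d.sameY j v1 hv1m v2 hv2m
    have hxu : (d.pos u1).1 ≠ (d.pos u2).1 := by
      intro h
      exact hu12 (d.inj (Prod.ext h hyu))
    have hxv : (d.pos v1).1 ≠ (d.pos v2).1 := by
      intro h
      exact hv12 (d.inj (Prod.ext h hyv))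
    have key : ∀ (x y z w : Fin n), x ∈ d.paths i → y ∈ d.paths i → z ∈ d.paths j →
        w ∈ d.paths j → x ≠ y → z ≠ w →
        openSegment ℝ (d.pos x) (d.pos z) ∩ openSegment ℝ (d.pos y) (d.pos w) = ∅ := by
      intro x y z w hx hy hz hw hxy hzw
      apply d.noncross
      · rw [SimpleGraph.top_adj]; exact hne' i j hij x hx z hz
      · rw [SimpleGraph.top_adj]; exact hne' i j hij y hy w hw
      · exact hsep i j hij x hx z hz
      · exact hsep i j hij y hy w hw
      · intro hset
        have hx_mem : x ∈ ({y, w} : Set (Fin n)) := by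
          rw [← hset]; exact Set.mem_insert _ _
        rcases hx_mem with h | h
        · exact hxy h
        · exact hne' i j hij x hx w hw h
    exact cross22 (d.pos u1) (d.pos u2) (d.pos v1) (d.pos v2) hyu hyv hxu hxv
      (key u1 u2 v2 v1 hu1m hu2m hv2m hv1m hu12 (Ne.symm hv12))
      (key u1 u2 v1 v2 hu1m hu2m hv1m hv2m hu12 hv12)
  · have hcov : (Finset.univ : Finset (Fin n)) ⊆
        Finset.univ.biUnion (fun i : Fin k => (d.paths i).toFinset) := by
      intro v _
      obtain ⟨i, hi⟩ := d.cover v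
      exact Finset.mem_biUnion.mpr ⟨i, Finset.mem_univ _, List.mem_toFinset.mpr hi⟩
    have hsum : n ≤ ∑ i : Fin k, (d.paths i).toFinset.card := by
      calc n = (Finset.univ : Finset (Fin n)).card := by simp
        _ ≤ (Finset.univ.biUnion (fun i : Fin k => (d.paths i).toFinset)).card :=
            Finset.card_le_card hcov
        _ ≤ ∑ i : Fin k, (d.paths i).toFinset.card := Finset.card_biUnion_le
    have h5k : 5 ≤ k := by
      by_cases hex : ∃ i0, 2 ≤ (d.paths i0).length
      · obtain ⟨i0, hi0⟩ := hex
        have hone : ∀ i : Fin k, i ≠ i0 → (d.paths i).length ≤ 1 := by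
          intro i hne
          by_contra hc
          push_neg at hc
          exact hpair ⟨i, i0, hne, hc, hi0⟩
        have hb : ∀ i : Fin k, (d.paths i).toFinset.card ≤ 1 + (if i = i0 then 1 else 0) := by
          intro i
          have hc := List.toFinset_card_le (d.paths i)
          by_cases h : i = i0
          · subst h
            simp only [if_pos rfl]
            exact le_trans hc (hlen i)
          · simp only [if_neg h, add_zero]
            exact le_trans hc (hone i h)
        have hle : ∑ i : Fin k, (d.paths i).toFinset.card
            ≤ ∑ i : Fin k, (1 + (if i = i0 then 1 else 0)) :=
          Finset.sum_le_sum (fun i _ => hb i)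
        have hs2 : ∑ i : Fin k, (1 + (if i = i0 then 1 else 0)) = k + 1 := by
          rw [Finset.sum_add_distrib, Finset.sum_const, Finset.sum_ite_eq']
          simp [mul_comm]
        omega
      · push_neg at hex
        have hle : ∑ i : Fin k, (d.paths i).toFinset.card ≤ ∑ _i : Fin k, 1 :=
          Finset.sum_le_sum (fun i _ =>
            le_trans (List.toFinset_card_le _) (by have := hex i; omega))
        simp only [Finset.sum_const, Finset.card_univ, Fintype.card_fin, smul_eq_mul,
          mul_one] at hle
        omega
    set e : Fin 5 → Fin k := fun m => Fin.castLE h5k m with hedef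
    have heinj : Function.Injective e := fun a b h => by
      simpa [hedef, Fin.ext_iff] using congrArg Fin.val h
    set w : Fin 5 → Fin n := fun m => (d.paths (e m)).head (d.nonempty (e m)) with hwdef
    have hwm : ∀ m, w m ∈ d.paths (e m) := fun m => List.head_mem _
    have hwinj : Function.Injective w := by
      intro a b h
      by_contra hab
      exact hne' (e a) (e b) (fun hh => hab (heinj hh)) (w a) (hwm a) (w b) (hwm b) h
    apply L5un (fun m => d.pos (w m))
    · intro a b hab
      exact d.diffY (e a) (e b) (fun h => hab (heinj h)) (w a) (hwm a) (w b) (hwm b)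
    · intro a b c c' hab hcd h1 h2
      apply d.noncross
      · rw [SimpleGraph.top_adj]; exact fun h => hab (hwinj h)
      · rw [SimpleGraph.top_adj]; exact fun h => hcd (hwinj h)
      · exact hsep (e a) (e b) (fun h => hab (heinj h)) (w a) (hwm a) (w b) (hwm b)
      · exact hsep (e c) (e c') (fun h => hcd (heinj h)) (w c) (hwm c) (w c') (hwm c')
      · intro hset
        rcases Set.pair_eq_pair_iff.mp hset with ⟨x1, x2⟩ | ⟨x1, x2⟩
        · exact h1 ⟨hwinj x1, hwinj x2⟩
        · exact h2 ⟨hwinj x1, hwinj x2⟩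
end

section
/- Let G be a graph, F a zero forcing set of G, and S a chain set corresponding to F. Let x and y be two vertices lying in the same chain R in S with x preceding y in the chain order. Then for every neighbor z of x that does not lie in R, z is colored strictly before y in the forcing process (i.e., k_F(z) < k_F(y)). -/
open SimpleGraph

lemma kF_mono_of_chain {V : Type*} (G : SimpleGraph V) (F : Set V)
    (L : List V) (hc : L.Chain' (Forces G F)) :
    ∀ b (hb : b < L.length) a (ha : a < L.length), a ≤ b →
      kF G F (L.get ⟨a, ha⟩) ≤ kF G F (L.get ⟨b, hb⟩) := by
  intro b
  induction b with
  | zero => intro hb a ha hab; interval_cases a; rfl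
  | succ n ih =>
    intro hb a ha hab
    rcases Nat.lt_or_ge a (n+1) with h | h
    · have hn : n < L.length := lt_trans (Nat.lt_succ_self n) hb
      have h1 : kF G F (L.get ⟨a, ha⟩) ≤ kF G F (L.get ⟨n, hn⟩) :=
        ih hn a ha (Nat.lt_succ_iff.mp h)
      have h2 : Forces G F (L.get ⟨n, hn⟩) (L.get ⟨n+1, hb⟩) :=
        List.isChain_iff_getElem.mp hc n (by omega)
      exact h1.trans h2.2.1.le
    · have : a = n+1 := le_antisymm hab h
      subst this; rfl

/-- If `x` precedes `y` in a chain `R i`, then every neighbor `z` of `x`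
outside `R i` is colored strictly before `y`. -/
theorem neighbor_colored_before {V : Type*} (G : SimpleGraph V) {k : ℕ}
    (F : Set V) (hF : IsForcingSet G F) (R : Fin k → List V)
    (hR : IsChainSet G F R) (i : Fin k) (x y : V)
    (hxy : Precedes (R i) x y) (z : V) (hz : G.Adj x z) (hzR : z ∉ R i) :
    kF G F z < kF G F y := by
  obtain ⟨p, q, hpq, hx, hy⟩ := hxy
  have hp1 : (p : ℕ) + 1 < (R i).length := lt_of_le_of_lt hpq q.isLt
  have hforce : Forces G F ((R i).get p) ((R i).get ⟨(p : ℕ)+1, hp1⟩) := by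
    have := List.isChain_iff_getElem.mp (hR.2.2.1 i) p (by omega)
    simpa using this
  have hmem : (R i).get ⟨(p : ℕ)+1, hp1⟩ ∈ R i := (R i).get_mem _
  have hne : z ≠ (R i).get ⟨(p : ℕ)+1, hp1⟩ := fun h => hzR (h ▸ hmem)
  have h1 : kF G F z < kF G F ((R i).get ⟨(p : ℕ)+1, hp1⟩) :=
    hforce.2.2 z (hx ▸ hz) hne
  have h2 : kF G F ((R i).get ⟨(p : ℕ)+1, hp1⟩) ≤ kF G F ((R i).get q) :=
    kF_mono_of_chain G F (R i) (hR.2.2.1 i) q q.isLt _ hp1 hpq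
  rw [← hy]
  exact lt_of_lt_of_le h1 h2
end

section
/- Let G be a graph, F a zero forcing set, and S a chain set corresponding to F. If xy is an edge of G with x in chain R_1 and y in a different chain R_2, then there is no edge x'y' of G with x' in R_1, y' in R_2, such that x precedes x' in R_1 and y' precedes y in R_2 (i.e., segments between two chains cannot cross). -/
open SimpleGraph

lemma chain_kF_le {V : Type*} (G : SimpleGraph V) (F : Set V) {L : List V}
    (h : L.Chain' (Forces G F)) {p q : ℕ} (hp : p < L.length) (hq : q < L.length)
    (hpq : p ≤ q) : kF G F (L.get ⟨p, hp⟩) ≤ kF G F (L.get ⟨q, hq⟩) := by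
  induction q with
  | zero => simp_all
  | succ n ih =>
    rcases Nat.lt_or_ge p (n+1) with h1 | h1
    · have hn : n < L.length := Nat.lt_of_succ_lt hq
      have hstep : Forces G F (L.get ⟨n, hn⟩) (L.get ⟨n+1, hq⟩) := by
        have := List.isChain_iff_getElem.mp h n (by omega)
        exact this
      exact le_trans (ih hn (by omega)) (le_of_lt hstep.2.1)
    · have : p = n + 1 := by omega
      subst this
      rfl

/-- Segments between two chains cannot cross: if `xy` is an edge with `x` in
chain `R i` and `y` in a different chain `R j`, there is no edge `x'y'` with
`x' ∈ R i`, `y' ∈ R j`, `x` preceding `x'` and `y'` preceding `y`. -/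
theorem segments_no_cross {V : Type*} (G : SimpleGraph V) {k : ℕ}
    (F : Set V) (hF : IsForcingSet G F) (R : Fin k → List V)
    (hR : IsChainSet G F R) (i j : Fin k) (hij : i ≠ j) (x y : V)
    (hx : x ∈ R i) (hy : y ∈ R j) (hadj : G.Adj x y) :
    ¬ ∃ x' y' : V, G.Adj x' y' ∧ x' ∈ R i ∧ y' ∈ R j ∧
      Precedes (R i) x x' ∧ Precedes (R j) y' y := by
  rintro ⟨x', y', hadj', hx'i, hy'j, ⟨p, q, hpq, hgp, hgq⟩, ⟨p', q', hpq', hgp', hgq'⟩⟩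
  obtain ⟨_, _, hchain, _, hdisj, _⟩ := hR
  -- successor w of x in R i
  have hp1 : (p : ℕ) + 1 < (R i).length := by omega
  set w := (R i).get ⟨(p : ℕ) + 1, hp1⟩ with hw
  have hforce_w : Forces G F ((R i).get ⟨(p : ℕ), p.isLt⟩) w := by
    have := List.isChain_iff_getElem.mp (hchain i) p (by omega)
    simpa [hw] using this
  -- successor z of y' in R j
  have hp1' : (p' : ℕ) + 1 < (R j).length := by omega
  set z := (R j).get ⟨(p' : ℕ) + 1, hp1'⟩ with hz
  have hforce_z : Forces G F ((R j).get ⟨(p' : ℕ), p'.isLt⟩) z := by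
    have := List.isChain_iff_getElem.mp (hchain j) p' (by omega)
    simpa [hz] using this
  have hxg : (R i).get ⟨(p : ℕ), p.isLt⟩ = x := by simpa using hgp
  have hy'g : (R j).get ⟨(p' : ℕ), p'.isLt⟩ = y' := by simpa using hgp'
  -- w ∈ R i, z ∈ R j
  have hwmem : w ∈ R i := List.get_mem _ _
  have hzmem : z ∈ R j := List.get_mem _ _
  -- y ≠ w since y ∈ R j and w ∈ R i
  have hynw : y ≠ w := fun h => (hdisj i j hij w hwmem) (h ▸ hy)
  have hx'nz : x' ≠ z := fun h => (hdisj j i hij.symm z hzmem) (h ▸ hx'i)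
  -- kF y < kF w
  have h1 : kF G F y < kF G F w := hforce_w.2.2 y (hxg ▸ hadj) hynw
  -- kF w ≤ kF x'
  have h2 : kF G F w ≤ kF G F x' := by
    have := chain_kF_le G F (hchain i) hp1 q.isLt (by omega)
    have hgq2 : (R i)[(q:ℕ)] = x' := hgq
    simpa [hw, hgq2] using this
  -- kF x' < kF z
  have h3 : kF G F x' < kF G F z := hforce_z.2.2 x' (hy'g ▸ hadj'.symm) hx'nz
  -- kF z ≤ kF y
  have h4 : kF G F z ≤ kF G F y := by
    have := chain_kF_le G F (hchain j) hp1' q'.isLt (by omega)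
    have hgq2' : (R j)[(q':ℕ)] = y := hgq'
    simpa [hz, hgq2'] using this
  omega
end

section
/- Let G be a graph, F a zero forcing set, and S a chain set corresponding to F. Suppose there are three distinct chains R_1, R_2, R_3 in S and edges ab and cd with a in R_1, b and c in R_2, d in R_3, and c preceding b in R_2. Then there is no edge xy with x in R_1, y in R_3, such that a precedes x in R_1 and y precedes d in R_3. -/
open SimpleGraph

lemma chain_neighbor_lt {V : Type*} (G : SimpleGraph V) (F : Set V) {L : List V}
    (hch : L.Chain' (Forces G F)) {u v z : V} (hpre : Precedes L u v)
    (hadj : G.Adj u z) (hz : z ∉ L) : kF G F z < kF G F v := by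
  obtain ⟨p, q, hpq, hu, hv⟩ := hpre
  have hp1 : (p : ℕ) + 1 < L.length := lt_of_le_of_lt hpq q.isLt
  have hforce : Forces G F u (L.get ⟨(p : ℕ) + 1, hp1⟩) := by
    have := List.isChain_iff_getElem.mp hch (p : ℕ) (by omega)
    rw [← hu]; simpa using this
  have hzw : z ≠ L.get ⟨(p : ℕ) + 1, hp1⟩ := by
    intro h; exact hz (h ▸ List.get_mem L _)
  have h1 : kF G F z < kF G F (L.get ⟨(p : ℕ) + 1, hp1⟩) :=
    hforce.2.2 z hadj hzw
  have hpw : L.Pairwise (fun u v => kF G F u < kF G F v) := by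
    haveI : IsTrans V (fun u v => kF G F u < kF G F v) := ⟨fun a b c => lt_trans⟩
    exact List.isChain_iff_pairwise.mp (hch.imp fun _ _ hf => hf.2.1)
  have h2 : kF G F (L.get ⟨(p : ℕ) + 1, hp1⟩) ≤ kF G F v := by
    rcases eq_or_lt_of_le (Nat.succ_le_of_lt hpq) with h | h
    · have : (⟨(p : ℕ) + 1, hp1⟩ : Fin L.length) = q := Fin.ext h
      rw [this, hv]
    · have := List.pairwise_iff_get.mp hpw ⟨(p : ℕ) + 1, hp1⟩ q h
      rw [hv] at this; exact this.le
  exact lt_of_lt_of_le h1 h2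

/-- If there are edges `ab` and `cd` with `a ∈ R i₁`, `b, c ∈ R i₂`, `d ∈ R i₃`
and `c` preceding `b`, then there is no edge `xy` with `x ∈ R i₁`, `y ∈ R i₃`,
`a` preceding `x` and `y` preceding `d`. -/
theorem three_chains_no_cross {V : Type*} (G : SimpleGraph V) {k : ℕ}
    (F : Set V) (hF : IsForcingSet G F) (R : Fin k → List V)
    (hR : IsChainSet G F R) (i₁ i₂ i₃ : Fin k)
    (h12 : i₁ ≠ i₂) (h13 : i₁ ≠ i₃) (h23 : i₂ ≠ i₃)
    (a b c d : V) (ha : a ∈ R i₁) (hb : b ∈ R i₂) (hc : c ∈ R i₂) (hd : d ∈ R i₃)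
    (hab : G.Adj a b) (hcd : G.Adj c d) (hcb : Precedes (R i₂) c b) :
    ¬ ∃ x y : V, G.Adj x y ∧ x ∈ R i₁ ∧ y ∈ R i₃ ∧
      Precedes (R i₁) a x ∧ Precedes (R i₃) y d := by
  rintro ⟨x, y, hxy, hx, hy, hax, hyd⟩
  have hdisj := hR.2.2.2.2.1
  have hch := hR.2.2.1
  -- kF d < kF b, using edge cd and c ≺ b in R i₂
  have h1 : kF G F d < kF G F b :=
    chain_neighbor_lt G F (hch i₂) hcb hcd (hdisj i₃ i₂ h23.symm d hd)
  -- kF b < kF x, using edge ab and a ≺ x in R i₁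
  have h2 : kF G F b < kF G F x :=
    chain_neighbor_lt G F (hch i₁) hax hab (hdisj i₂ i₁ h12.symm b hb)
  -- kF x < kF d, using edge xy and y ≺ d in R i₃
  have h3 : kF G F x < kF G F d :=
    chain_neighbor_lt G F (hch i₃) hyd hxy.symm (hdisj i₁ i₃ h13 x hx)
  omega
end

section
/- Let G be a graph with maximum degree at most 3, F a zero forcing set, and S a corresponding chain set. If a vertex v lying in a non-trivial chain R_1 has two non-consecutive neighbors in another non-trivial chain R_2 (i.e., v is a bad vertex), then v is the initial vertex of R_1. -/
open SimpleGraph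

/-- `v` has two non-consecutive neighbors in the list `L`. -/
def TwoNonconsecNbrs {V : Type*} (G : SimpleGraph V) (L : List V) (v : V) : Prop :=
  ∃ p q : Fin L.length, (p : ℕ) + 1 < (q : ℕ) ∧
    G.Adj v (L.get p) ∧ G.Adj v (L.get q)

/-- `F` is a total forcing set: a zero forcing set inducing a subgraph with no
isolated vertex. -/
def IsTotalForcingSet {V : Type*} (G : SimpleGraph V) (F : Set V) : Prop :=
  IsForcingSet G F ∧ ∀ v ∈ F, ∃ u ∈ F, G.Adj u v

/-- The total forcing number of `G`. -/
noncomputable def totalForcingNumber {V : Type*} (G : SimpleGraph V) [Fintype V] : ℕ :=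
  sInf {m | ∃ F : Finset V, F.card = m ∧ IsTotalForcingSet G ↑F}

/-- `A` is a real symmetric matrix whose off-diagonal nonzero pattern is the
adjacency of `G`. -/
def MatrixOfGraph {V : Type*} (G : SimpleGraph V) (A : Matrix V V ℝ) : Prop :=
  A.IsSymm ∧ ∀ i j, i ≠ j → (A i j ≠ 0 ↔ G.Adj i j)

/-- The maximum nullity `M(G)` of `G`. -/
noncomputable def maxNullity {V : Type*} (G : SimpleGraph V) [Fintype V] : ℕ :=
  sSup {m | ∃ A : Matrix V V ℝ, MatrixOfGraph G A ∧ Fintype.card V - A.rank = m}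

/-- The disjoint union of `k` paths, the `i`-th of order `n i`. -/
def disjointPaths (k : ℕ) (n : Fin k → ℕ) : SimpleGraph (Σ i, Fin (n i)) :=
  SimpleGraph.fromRel (fun a b => a.1 = b.1 ∧ (a.2 : ℕ) + 1 = (b.2 : ℕ))

lemma coloredAt_mono {V : Type*} (G : SimpleGraph V) (F : Set V) :
    Monotone (coloredAt G F) :=
  monotone_nat_of_le_succ fun _ => Set.subset_union_left

lemma mem_coloredAt_kF {V : Type*} {G : SimpleGraph V} {F : Set V}
    (hF : IsForcingSet G F) (v : V) : v ∈ coloredAt G F (kF G F v) :=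
  Nat.sInf_mem (s := {n | v ∈ coloredAt G F n}) (hF v)


/-- In a graph of maximum degree at most 3, every bad vertex (a vertex of a
non-trivial chain with two non-consecutive neighbors in another non-trivial
chain) is the initial vertex of its chain. -/
theorem bad_vertex_is_initial {V : Type*} [Fintype V] [DecidableEq V]
    (G : SimpleGraph V) [DecidableRel G.Adj] (hdeg : ∀ v, G.degree v ≤ 3)
    {k : ℕ} (F : Finset V) (hF : IsForcingSet G ↑F)
    (R : Fin k → List V) (hR : IsChainSet G ↑F R)
    (i j : Fin k) (hij : i ≠ j)
    (hi : 2 ≤ (R i).length) (hj : 2 ≤ (R j).length)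
    (v : V) (hv : v ∈ R i) (hbad : TwoNonconsecNbrs G (R j) v) :
    (R i).head? = some v := by
  obtain ⟨hne, hhead, hchain, hnodup, hdisj, hcover⟩ := hR
  obtain ⟨p, q, hpq, hax, hay⟩ := hbad
  have hvj : v ∉ R j := hdisj i j hij v hv
  obtain ⟨t, htv⟩ := List.mem_iff_get.mp hv
  by_cases ht0 : (t : ℕ) = 0
  · rw [List.head?_eq_getElem?, List.getElem?_eq_getElem (by omega : 0 < (R i).length)]
    have : t = ⟨0, by omega⟩ := Fin.ext ht0
    rw [this] at htv
    exact congrArg some htv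
  exfalso
  -- the predecessor u of v in R i
  have htpos : 0 < (t : ℕ) := Nat.pos_of_ne_zero ht0
  set u : V := (R i).get ⟨(t : ℕ) - 1, by omega⟩ with hu_def
  have hforce_uv : Forces G F u v := by
    have : Forces G F ((R i).get ⟨(t:ℕ) - 1, by omega⟩) ((R i).get ⟨(t:ℕ) - 1 + 1, by omega⟩) :=
      List.isChain_iff_getElem.mp (hchain i) ((t : ℕ) - 1) (by omega)
    have he : ((t : ℕ) - 1) + 1 = (t : ℕ) := by omega
    simp only [he] at this
    rwa [show (⟨(t:ℕ), by omega⟩ : Fin (R i).length) = t from Fin.ext rfl, htv] at this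
  have hui : u ∈ R i := List.get_mem _ _
  have huj : u ∉ R j := hdisj i j hij u hui
  set x : V := (R j).get p with hx_def
  set y : V := (R j).get q with hy_def
  have hxj : x ∈ R j := List.get_mem _ _
  have hyj : y ∈ R j := List.get_mem _ _
  have hxy : x ≠ y := by
    intro h
    have := (List.Nodup.get_inj_iff (hnodup j)).mp h
    exact absurd (congrArg Fin.val this) (by omega)
  have hux : u ≠ x := fun h => huj (h ▸ hxj)
  have huy : u ≠ y := fun h => huj (h ▸ hyj)
  have hadj_vu : G.Adj v u := hforce_uv.1.symm
  -- the successor x' of x in R j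
  set x' : V := (R j).get ⟨(p : ℕ) + 1, by omega⟩ with hx'_def
  have hx'j : x' ∈ R j := List.get_mem _ _
  have hvx' : v ≠ x' := fun h => hvj (h ▸ hx'j)
  have hforce_xx' : Forces G F x x' :=
    List.isChain_iff_getElem.mp (hchain j) (p : ℕ) (by omega)
  -- kF increases along R j
  have hpair : (R j).Pairwise (fun a b => kF G F a < kF G F b) := by
    haveI : Trans (fun a b : V => kF G F a < kF G F b) (fun a b => kF G F a < kF G F b)
      (fun a b => kF G F a < kF G F b) := ⟨lt_trans⟩
    exact List.isChain_iff_pairwise.mp ((hchain j).imp fun _ _ h => h.2.1)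
  have hx'y : kF G (↑F) x' < kF G (↑F) y :=
    List.pairwise_iff_get.mp hpair ⟨(p : ℕ) + 1, by omega⟩ q (Fin.lt_def.mpr hpq)
  have hvx'k : kF G (↑F) v < kF G (↑F) x' := hforce_xx'.2.2 v hax.symm hvx'
  have hxx'k : kF G (↑F) x < kF G (↑F) x' := hforce_xx'.2.1
  have huvk : kF G (↑F) u < kF G (↑F) v := hforce_uv.2.1
  -- v is the last vertex of R i, else degree ≥ 4
  have hlast : (t : ℕ) + 1 = (R i).length := by
    by_contra hl
    have hlt : (t : ℕ) + 1 < (R i).length := lt_of_le_of_ne t.isLt hl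
    set w : V := (R i).get ⟨(t : ℕ) + 1, hlt⟩ with hw_def
    have hforce_vw : Forces G F v w := by
      have : Forces G F ((R i).get ⟨(t:ℕ), by omega⟩) ((R i).get ⟨(t:ℕ) + 1, by omega⟩) :=
        List.isChain_iff_getElem.mp (hchain i) (t : ℕ) (by omega)
      rwa [show (⟨(t:ℕ), by omega⟩ : Fin (R i).length) = t from Fin.ext rfl, htv] at this
    have hwi : w ∈ R i := List.get_mem _ _
    have hwj : w ∉ R j := hdisj i j hij w hwi
    have hwx : w ≠ x := fun h => hwj (h ▸ hxj)
    have hwy : w ≠ y := fun h => hwj (h ▸ hyj)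
    have huw : u ≠ w := by
      intro h
      have := (List.Nodup.get_inj_iff (hnodup i)).mp h
      exact absurd (congrArg Fin.val this) (by simp)
    have hsub : ({u, w, x, y} : Finset V) ⊆ G.neighborFinset v := by
      intro z hz
      simp only [Finset.mem_insert, Finset.mem_singleton] at hz
      rw [SimpleGraph.mem_neighborFinset]
      rcases hz with rfl | rfl | rfl | rfl
      · exact hadj_vu
      · exact hforce_vw.1
      · exact hax
      · exact hay
    have hcard : ({u, w, x, y} : Finset V).card = 4 := by
      rw [Finset.card_insert_of_notMem (by simp [huw, hux, huy]),
        Finset.card_insert_of_notMem (by simp [hwx, hwy]),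
        Finset.card_insert_of_notMem (by simp [hxy]), Finset.card_singleton]
    have := Finset.card_le_card hsub
    rw [hcard] at this
    have := hdeg v
    rw [SimpleGraph.degree] at this
    omega
  -- all neighbors of v are among u, x, y
  have hnbr : ∀ z, G.Adj v z → z = u ∨ z = x ∨ z = y := by
    intro z hz
    by_contra hcon
    push_neg at hcon
    obtain ⟨hzu, hzx, hzy⟩ := hcon
    have hsub : ({z, u, x, y} : Finset V) ⊆ G.neighborFinset v := by
      intro a ha
      simp only [Finset.mem_insert, Finset.mem_singleton] at ha
      rw [SimpleGraph.mem_neighborFinset]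
      rcases ha with rfl | rfl | rfl | rfl
      · exact hz
      · exact hadj_vu
      · exact hax
      · exact hay
    have hcard : ({z, u, x, y} : Finset V).card = 4 := by
      rw [Finset.card_insert_of_notMem (by simp [hzu, hzx, hzy]),
        Finset.card_insert_of_notMem (by simp [hux, huy]),
        Finset.card_insert_of_notMem (by simp [hxy]), Finset.card_singleton]
    have := Finset.card_le_card hsub
    rw [hcard] at this
    have := hdeg v
    rw [SimpleGraph.degree] at this
    omega
  -- now y would be colored at step kF y - 1, contradiction
  set m : ℕ := kF G (↑F) y - 2 with hm_def
  have hvm : v ∈ coloredAt G (↑F) m :=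
    coloredAt_mono G (↑F) (by omega) (mem_coloredAt_kF hF v)
  have hum : u ∈ coloredAt G (↑F) m :=
    coloredAt_mono G (↑F) (by omega) (mem_coloredAt_kF hF u)
  have hxm : x ∈ coloredAt G (↑F) m :=
    coloredAt_mono G (↑F) (by omega) (mem_coloredAt_kF hF x)
  have hvy : v ≠ y := fun h => hvj (h ▸ hyj)
  have hym : y ∈ coloredAt G (↑F) (m + 1) := by
    refine Or.inr ⟨v, hvm, hay, fun z hz hzy => ?_⟩
    rcases hnbr z hz with rfl | rfl | rfl
    · exact hum
    · exact hxm
    · exact absurd rfl hzy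
  have : kF G (↑F) y ≤ m + 1 :=
    Nat.sInf_le (show m + 1 ∈ {n | y ∈ coloredAt G (↑F) n} from hym)
  omega
end
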